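/- arXiv:1110.6598 — 6 statements merged into one kernel-verified Lean document; each statement's English description precedes it below -/
import Mathlib

section
/- A function b : X × Y → ℝ ∪ {+∞} is a bipotential if and only if the function c : X × Y → ℝ ∪ {+∞} defined by c(x,y) = b(x,y) − ⟨x,y⟩ is a sync (synchronised convex function). -/
open scoped Classical
noncomputable section

def ERealConvexOn {X : Type*} [AddCommGroup X] [Module ℝ X] (f : X → EReal) : Prop :=
  ∀ x z : X, ∀ t : ℝ, 0 ≤ t → t ≤ 1 →
    f (t • x + (1 - t) • z) ≤ (t : EReal) * f x + ((1 - t) : EReal) * f z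

def SubdiffFst {X Y : Type*} [AddCommGroup X] [Module ℝ X] [AddCommGroup Y] [Module ℝ Y]
    (pair : X →ₗ[ℝ] Y →ₗ[ℝ] ℝ) (f : X → EReal) (x : X) : Set Y :=
  {y | ∀ z, ((pair (z - x) y : ℝ) : EReal) ≤ f z - f x}

def SubdiffSnd {X Y : Type*} [AddCommGroup X] [Module ℝ X] [AddCommGroup Y] [Module ℝ Y]
    (pair : X →ₗ[ℝ] Y →ₗ[ℝ] ℝ) (g : Y → EReal) (y : Y) : Set X :=
  {x | ∀ w, ((pair x (w - y) : ℝ) : EReal) ≤ g w - g y}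

structure IsBipotential {X Y : Type*} [AddCommGroup X] [Module ℝ X] [TopologicalSpace X]
    [AddCommGroup Y] [Module ℝ Y] [TopologicalSpace Y]
    (pair : X →ₗ[ℝ] Y →ₗ[ℝ] ℝ) (b : X → Y → EReal) : Prop where
  ne_bot : ∀ x y, b x y ≠ ⊥
  convex_lsc_fst : ∀ y, (∃ x, b x y ≠ ⊤) →
    ERealConvexOn (fun x => b x y) ∧ LowerSemicontinuous (fun x => b x y)
  convex_lsc_snd : ∀ x, (∃ y, b x y ≠ ⊤) →
    ERealConvexOn (b x) ∧ LowerSemicontinuous (b x)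
  ge_pair : ∀ x y, ((pair x y : ℝ) : EReal) ≤ b x y
  subdiff_iff₁ : ∀ x y,
    y ∈ SubdiffFst pair (fun x' => b x' y) x ↔ x ∈ SubdiffSnd pair (b x) y
  subdiff_iff₂ : ∀ x y,
    x ∈ SubdiffSnd pair (b x) y ↔ b x y = ((pair x y : ℝ) : EReal)

structure IsSync {X Y : Type*} [AddCommGroup X] [Module ℝ X] [TopologicalSpace X]
    [AddCommGroup Y] [Module ℝ Y] [TopologicalSpace Y] (c : X → Y → EReal) : Prop where
  nonneg : ∀ x y, 0 ≤ c x y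
  convex_lsc_fst : ∀ y, (∃ x, c x y ≠ ⊤) →
    ERealConvexOn (fun x => c x y) ∧ LowerSemicontinuous (fun x => c x y)
  convex_lsc_snd : ∀ x, (∃ y, c x y ≠ ⊤) →
    ERealConvexOn (c x) ∧ LowerSemicontinuous (c x)
  min_snd : ∀ x, (∃ y, c x y ≠ ⊤) → ∀ y₀, (∀ y, c x y₀ ≤ c x y) → c x y₀ = 0
  min_fst : ∀ y, (∃ x, c x y ≠ ⊤) → ∀ x₀, (∀ x, c x₀ y ≤ c x y) → c x₀ y = 0

/-!
The gap `c = b - ⟨·, ·⟩` differs from `b` by a function that is continuous and linear in each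
variable, so `b` and `c` have the same partial domains, and their partial functions are convex and
lower semicontinuous together. The subgradient inequality saying that `x ∈ ∂b(x, ·)(y)` is
exactly the statement that `y` is a finite minimum point of `c(x, ·)`, and likewise in the first
variable. Once `c ≥ 0`, zeros of `c` are finite minimum points of both partial functions, so the
two subdifferential conditions of a bipotential say that the finite minimum points of the partial
functions of `c` are exactly its zeros, which is the sync condition.
-/

namespace EReal

lemma sub_coe_eq_top_iff {a : EReal} {r : ℝ} : a - r = ⊤ ↔ a = ⊤ := by
  induction a <;> simp [← coe_sub]

lemma sub_coe_eq_zero_iff {a : EReal} {r : ℝ} : a - r = 0 ↔ a = r := by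
  induction a <;> simp [← coe_sub, sub_eq_zero]

lemma sub_coe_nonneg_iff {a : EReal} {r : ℝ} : 0 ≤ a - r ↔ (r : EReal) ≤ a :=
  sub_nonneg (.inr (coe_ne_top r)) (.inr (coe_ne_bot r))

lemma coe_sub_le_sub_coe_iff {a r s : ℝ} {B : EReal} :
    ((s - r : ℝ) : EReal) ≤ B - a ↔ (a : EReal) - r ≤ B - s := by
  induction B with
  | bot => simp [← coe_sub]
  | top => simp [← coe_sub]
  | coe B => norm_cast; constructor <;> intro h <;> linarith

end EReal

section Convexity

variable {X : Type*} [AddCommGroup X] [Module ℝ X]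

lemma ERealConvexOn.add_convexOn {f : X → EReal} {g : X → ℝ} (hf : ERealConvexOn f)
    (hg : ConvexOn ℝ Set.univ g) : ERealConvexOn fun x => f x + g x := by
  intro x z t ht0 ht1
  have h1t : (1 : EReal) - t = ((1 - t : ℝ) : EReal) := by norm_cast
  have hdistrib (s : ℝ) (hs : 0 ≤ s) (u : EReal) (v : ℝ) :
      (s : EReal) * (u + v) = s * u + ((s * v : ℝ) : EReal) := by
    rw [EReal.left_distrib_of_nonneg_of_ne_top (EReal.coe_nonneg.mpr hs) (EReal.coe_ne_top s)]
    norm_cast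
  have hf' := hf x z t ht0 ht1
  have hg' : g (t • x + (1 - t) • z) ≤ t * g x + (1 - t) * g z :=
    hg.2 (Set.mem_univ x) (Set.mem_univ z) ht0 (sub_nonneg.2 ht1) (by ring)
  simp only [h1t] at hf' ⊢
  rw [hdistrib t ht0, hdistrib (1 - t) (sub_nonneg.2 ht1), add_add_add_comm, ← EReal.coe_add]
  exact add_le_add hf' (EReal.coe_le_coe_iff.mpr hg')

lemma erealConvexOn_sub_linearMap_iff {f : X → EReal} (ℓ : X →ₗ[ℝ] ℝ) :
    ERealConvexOn (fun x => f x - ℓ x) ↔ ERealConvexOn f := by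
  refine ⟨fun h => ?_, fun h => ?_⟩
  · simpa [EReal.sub_add_cancel] using h.add_convexOn (ℓ.convexOn convex_univ)
  · simpa [sub_eq_add_neg] using h.add_convexOn ((-ℓ).convexOn convex_univ)

end Convexity

section Semicontinuity

variable {X : Type*} [TopologicalSpace X]

lemma LowerSemicontinuous.add_continuous_real {f : X → EReal} {g : X → ℝ}
    (hf : LowerSemicontinuous f) (hg : Continuous g) :
    LowerSemicontinuous fun x => f x + g x :=
  hf.add' (continuous_coe_real_ereal.comp hg).lowerSemicontinuous fun _ =>
    EReal.continuousAt_add (.inr (EReal.coe_ne_bot _)) (.inr (EReal.coe_ne_top _))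

lemma lowerSemicontinuous_sub_coe_iff {f : X → EReal} {g : X → ℝ} (hg : Continuous g) :
    LowerSemicontinuous (fun x => f x - g x) ↔ LowerSemicontinuous f := by
  refine ⟨fun h => ?_, fun h => ?_⟩
  · simpa [EReal.sub_add_cancel] using h.add_continuous_real hg
  · simpa [sub_eq_add_neg] using h.add_continuous_real hg.neg

lemma erealConvexOn_and_lsc_sub_linearMap_iff [AddCommGroup X] [Module ℝ X] {f : X → EReal}
    (ℓ : X →ₗ[ℝ] ℝ) (hℓ : Continuous ℓ) :
    (ERealConvexOn (fun x => f x - ℓ x) ∧ LowerSemicontinuous (fun x => f x - ℓ x)) ↔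
      ERealConvexOn f ∧ LowerSemicontinuous f :=
  and_congr (erealConvexOn_sub_linearMap_iff ℓ) (lowerSemicontinuous_sub_coe_iff hℓ)

end Semicontinuity

section Subdifferential

variable {X Y : Type*} [AddCommGroup X] [Module ℝ X] [AddCommGroup Y] [Module ℝ Y]
  (pair : X →ₗ[ℝ] Y →ₗ[ℝ] ℝ)

lemma mem_subdiffSnd_iff {g : Y → EReal} {x : X} {y : Y} (hy : g y ≠ ⊥) :
    x ∈ SubdiffSnd pair g y ↔
      g y - pair x y ≠ ⊤ ∧ ∀ w, g y - pair x y ≤ g w - pair x w := by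
  by_cases htop : g y = ⊤
  · have hy_not_mem : x ∉ SubdiffSnd pair g y := fun h => by simpa [htop] using h y
    simp [hy_not_mem, htop]
  · obtain ⟨A, hA⟩ : ∃ A : ℝ, g y = A := ⟨_, (EReal.coe_toReal htop hy).symm⟩
    simp only [SubdiffSnd, Set.mem_ofPred_eq, hA, map_sub, ← EReal.coe_sub,
      EReal.coe_ne_top, ne_eq, not_false_eq_true, true_and]
    exact forall_congr' fun w => EReal.coe_sub_le_sub_coe_iff

lemma mem_subdiffFst_iff {f : X → EReal} {x : X} {y : Y} (hx : f x ≠ ⊥) :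
    y ∈ SubdiffFst pair f x ↔
      f x - pair x y ≠ ⊤ ∧ ∀ z, f x - pair x y ≤ f z - pair z y :=
  mem_subdiffSnd_iff pair.flip hx

end Subdifferential

lemma ne_top_and_forall_le_iff_eq_zero {α : Type*} {f : α → EReal} (hf : ∀ a, 0 ≤ f a)
    (hmin : (∃ a, f a ≠ ⊤) → ∀ a₀, (∀ a, f a₀ ≤ f a) → f a₀ = 0) {a₀ : α} :
    (f a₀ ≠ ⊤ ∧ ∀ a, f a₀ ≤ f a) ↔ f a₀ = 0 :=
  ⟨fun ⟨hfin, hle⟩ => hmin ⟨a₀, hfin⟩ a₀ hle,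
    fun h => ⟨h ▸ EReal.zero_ne_top, fun a => h ▸ hf a⟩⟩

section Bipotential

variable {X Y : Type*} [AddCommGroup X] [Module ℝ X] [TopologicalSpace X]
  [AddCommGroup Y] [Module ℝ Y] [TopologicalSpace Y] {pair : X →ₗ[ℝ] Y →ₗ[ℝ] ℝ}
  {b : X → Y → EReal}

lemma IsBipotential.isSync_sub_pair (hp₁ : ∀ x, Continuous fun y => pair x y)
    (hp₂ : ∀ y, Continuous fun x => pair x y) (hB : IsBipotential pair b) :
    IsSync fun x y => b x y - pair x y where
  nonneg x y := EReal.sub_coe_nonneg_iff.mpr (hB.ge_pair x y)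
  convex_lsc_fst y hy := (erealConvexOn_and_lsc_sub_linearMap_iff (pair.flip y) (hp₂ y)).mpr
    (hB.convex_lsc_fst y (hy.imp fun _ => mt EReal.sub_coe_eq_top_iff.mpr))
  convex_lsc_snd x hx := (erealConvexOn_and_lsc_sub_linearMap_iff (pair x) (hp₁ x)).mpr
    (hB.convex_lsc_snd x (hx.imp fun _ => mt EReal.sub_coe_eq_top_iff.mpr))
  min_snd x := fun ⟨w, hw⟩ y₀ hmin => by
    have hsub : x ∈ SubdiffSnd pair (b x) y₀ :=
      (mem_subdiffSnd_iff pair (hB.ne_bot x y₀)).mpr ⟨ne_top_of_le_ne_top hw (hmin w), hmin⟩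
    exact EReal.sub_coe_eq_zero_iff.mpr ((hB.subdiff_iff₂ x y₀).mp hsub)
  min_fst y := fun ⟨z, hz⟩ x₀ hmin => by
    have hsub : y ∈ SubdiffFst pair (b · y) x₀ :=
      (mem_subdiffFst_iff pair (hB.ne_bot x₀ y)).mpr ⟨ne_top_of_le_ne_top hz (hmin z), hmin⟩
    exact EReal.sub_coe_eq_zero_iff.mpr
      ((hB.subdiff_iff₂ x₀ y).mp ((hB.subdiff_iff₁ x₀ y).mp hsub))

lemma IsSync.isBipotential_of_sub_pair (hp₁ : ∀ x, Continuous fun y => pair x y)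
    (hp₂ : ∀ y, Continuous fun x => pair x y) (hS : IsSync fun x y => b x y - pair x y) :
    IsBipotential pair b := by
  have ge_pair x y : (pair x y : EReal) ≤ b x y := EReal.sub_coe_nonneg_iff.mp (hS.nonneg x y)
  have ne_bot x y : b x y ≠ ⊥ := ne_bot_of_le_ne_bot (EReal.coe_ne_bot _) (ge_pair x y)
  have subdiffSnd_iff x y : x ∈ SubdiffSnd pair (b x) y ↔ b x y - pair x y = 0 :=
    (mem_subdiffSnd_iff pair (ne_bot x y)).trans
      (ne_top_and_forall_le_iff_eq_zero (hS.nonneg x) (hS.min_snd x))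
  have subdiffFst_iff x y : y ∈ SubdiffFst pair (b · y) x ↔ b x y - pair x y = 0 :=
    (mem_subdiffFst_iff pair (ne_bot x y)).trans
      (ne_top_and_forall_le_iff_eq_zero (hS.nonneg · y) (hS.min_fst y))
  refine ⟨ne_bot, fun y hy => ?_, fun x hx => ?_, ge_pair,
    fun x y => (subdiffFst_iff x y).trans (subdiffSnd_iff x y).symm,
    fun x y => (subdiffSnd_iff x y).trans EReal.sub_coe_eq_zero_iff⟩
  · exact (erealConvexOn_and_lsc_sub_linearMap_iff (pair.flip y) (hp₂ y)).mp
      (hS.convex_lsc_fst y (hy.imp fun _ => mt EReal.sub_coe_eq_top_iff.mp))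
  · exact (erealConvexOn_and_lsc_sub_linearMap_iff (pair x) (hp₁ x)).mp
      (hS.convex_lsc_snd x (hx.imp fun _ => mt EReal.sub_coe_eq_top_iff.mp))

end Bipotential

theorem bipotential_iff_sync_general {X Y : Type*} [AddCommGroup X] [Module ℝ X] [TopologicalSpace X]
    [AddCommGroup Y] [Module ℝ Y] [TopologicalSpace Y]
    (pair : X →ₗ[ℝ] Y →ₗ[ℝ] ℝ)
    (hp₁ : ∀ x, Continuous fun y => pair x y) (hp₂ : ∀ y, Continuous fun x => pair x y)
    (b : X → Y → EReal) :
    IsBipotential pair b ↔ IsSync (fun x y => b x y - ((pair x y : ℝ) : EReal)) :=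
  ⟨IsBipotential.isSync_sub_pair hp₁ hp₂, IsSync.isBipotential_of_sub_pair hp₁ hp₂⟩

theorem bipotential_iff_sync {X Y : Type*} [AddCommGroup X] [Module ℝ X] [TopologicalSpace X]
    [AddCommGroup Y] [Module ℝ Y] [TopologicalSpace Y]
    (pair : X →ₗ[ℝ] Y →ₗ[ℝ] ℝ)
    (hp₁ : ∀ x, Continuous fun y => pair x y) (hp₂ : ∀ y, Continuous fun x => pair x y)
    (b : X → Y → EReal) (hb : ∀ x y, b x y ≠ ⊥) :
    IsBipotential pair b ↔ IsSync (fun x y => b x y - ((pair x y : ℝ) : EReal)) :=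
  bipotential_iff_sync_general pair hp₁ hp₂ b
end
end

section
/- If c : X × Y → [0,+∞] is a sync with respect to one choice of duality pairing data, then for any duality pairing ⟨·,·⟩ on X × Y, the function b(x,y) := c(x,y) + ⟨x,y⟩ is a bipotential with respect to ⟨·,·⟩. -/
/-!
Adding the pairing cancels the slope: `⟨x, ·⟩` is a subgradient of `c x · + ⟨x, ·⟩` at `y`
exactly when `c x ·` attains a finite minimum at `y`, which for a sync means `c x y = 0`; the
same holds in the first argument. So both subdifferential conditions, and the equality
`b x y = ⟨x, y⟩`, reduce to `c x y = 0`. Convexity and lower semicontinuity of the partial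
functions survive adding a continuous linear function.
-/

open scoped Classical
noncomputable section

lemma EReal.add_coe_eq_coe_iff {a : EReal} {r : ℝ} : a + r = r ↔ a = 0 := by
  refine ⟨fun h => ?_, fun h => by rw [h, zero_add]⟩
  simpa [EReal.add_sub_cancel_right] using congrArg (· - (r : EReal)) h

lemma EReal.coe_sub_le_add_coe_sub_add_coe_iff {q : ℝ} {b : EReal} (hb : b ≠ ⊥) (r s : ℝ) :
    ((r - s : ℝ) : EReal) ≤ b + r - (q + s) ↔ (q : EReal) ≤ b := by
  induction b with
  | bot => exact absurd rfl hb
  | top => simp only [EReal.top_add_coe, ← EReal.coe_add, EReal.top_sub_coe, le_top]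
  | coe b => norm_cast; constructor <;> intro h <;> linarith

lemma forall_coe_sub_le_add_coe_sub_iff {α : Type*} {d : α → EReal} (hd : ∀ a, d a ≠ ⊥)
    (P : α → ℝ) (a : α) :
    (∀ w, ((P w - P a : ℝ) : EReal) ≤ d w + P w - (d a + P a)) ↔
      d a ≠ ⊤ ∧ ∀ w, d a ≤ d w := by
  rcases eq_or_ne (d a) ⊤ with htop | htop
  · refine iff_of_false (fun h => ?_) (by simp [htop])
    simpa [htop] using h a
  · lift d a to ℝ using ⟨htop, hd a⟩ with q
    rw [and_iff_right (EReal.coe_ne_top q)]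
    exact forall_congr' fun w => EReal.coe_sub_le_add_coe_sub_add_coe_iff (hd w) _ _

section Pairing

variable {X Y : Type*} [AddCommGroup X] [Module ℝ X] [AddCommGroup Y] [Module ℝ Y]
  (pair : X →ₗ[ℝ] Y →ₗ[ℝ] ℝ)

lemma mem_subdiffFst_add_pair_iff {f : X → EReal} (hf : ∀ x, f x ≠ ⊥) (x : X) (y : Y) :
    y ∈ SubdiffFst pair (fun z => f z + pair z y) x ↔ f x ≠ ⊤ ∧ ∀ z, f x ≤ f z := by
  simp only [SubdiffFst, Set.mem_ofPred_eq, map_sub, LinearMap.sub_apply]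
  exact forall_coe_sub_le_add_coe_sub_iff hf (pair · y) x

lemma mem_subdiffSnd_add_pair_iff {g : Y → EReal} (hg : ∀ y, g y ≠ ⊥) (x : X) (y : Y) :
    x ∈ SubdiffSnd pair (fun w => g w + pair x w) y ↔ g y ≠ ⊤ ∧ ∀ w, g y ≤ g w := by
  simp only [SubdiffSnd, Set.mem_ofPred_eq, map_sub]
  exact forall_coe_sub_le_add_coe_sub_iff hg (pair x) y

end Pairing

lemma ERealConvexOn.add_linearMap {X : Type*} [AddCommGroup X] [Module ℝ X] {f : X → EReal}
    (hf : ERealConvexOn f) (ℓ : X →ₗ[ℝ] ℝ) : ERealConvexOn fun x => f x + (ℓ x : EReal) := by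
  intro x z t ht₀ ht₁
  have hcoe : (1 : EReal) - t = ((1 - t : ℝ) : EReal) := by norm_cast
  have hdistrib (s : ℝ) (hs : 0 ≤ s) (a b : EReal) : (s : EReal) * (a + b) = s * a + s * b :=
    EReal.left_distrib_of_nonneg_of_ne_top (EReal.coe_nonneg.2 hs) (EReal.coe_ne_top s) a b
  have hf' := hf x z t ht₀ ht₁
  rw [hcoe] at hf' ⊢
  dsimp only
  rw [hdistrib t ht₀, hdistrib (1 - t) (by linarith), add_add_add_comm, map_add, map_smul,
    map_smul, smul_eq_mul, smul_eq_mul, EReal.coe_add, EReal.coe_mul, EReal.coe_mul]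
  exact add_le_add_left hf' _

lemma LowerSemicontinuous.add_coe_continuous {X : Type*} [TopologicalSpace X] {f : X → EReal}
    (hf : LowerSemicontinuous f) {g : X → ℝ} (hg : Continuous g) :
    LowerSemicontinuous fun x => f x + (g x : EReal) :=
  hf.add' (continuous_coe_real_ereal.comp hg).lowerSemicontinuous fun _ =>
    EReal.continuousAt_add (Or.inr (EReal.coe_ne_bot _)) (Or.inr (EReal.coe_ne_top _))

namespace IsSync

variable {X Y : Type*} [AddCommGroup X] [Module ℝ X] [TopologicalSpace X]
  [AddCommGroup Y] [Module ℝ Y] [TopologicalSpace Y] {c : X → Y → EReal}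

lemma ne_bot (hc : IsSync c) (x : X) (y : Y) : c x y ≠ ⊥ :=
  ne_bot_of_le_ne_bot EReal.zero_ne_bot (hc.nonneg x y)

lemma isFiniteMin_fst_iff (hc : IsSync c) (x : X) (y : Y) :
    (c x y ≠ ⊤ ∧ ∀ z, c x y ≤ c z y) ↔ c x y = 0 :=
  ⟨fun ⟨hx, hmin⟩ => hc.min_fst y ⟨x, hx⟩ x hmin,
    fun h => ⟨h ▸ EReal.zero_ne_top, fun z => h ▸ hc.nonneg z y⟩⟩

lemma isFiniteMin_snd_iff (hc : IsSync c) (x : X) (y : Y) :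
    (c x y ≠ ⊤ ∧ ∀ w, c x y ≤ c x w) ↔ c x y = 0 :=
  ⟨fun ⟨hy, hmin⟩ => hc.min_snd x ⟨y, hy⟩ y hmin,
    fun h => ⟨h ▸ EReal.zero_ne_top, fun w => h ▸ hc.nonneg x w⟩⟩

end IsSync

theorem sync_add_pairing_isBipotential {X Y : Type*}
    [AddCommGroup X] [Module ℝ X] [TopologicalSpace X]
    [AddCommGroup Y] [Module ℝ Y] [TopologicalSpace Y]
    (pair : X →ₗ[ℝ] Y →ₗ[ℝ] ℝ)
    (hp₁ : ∀ x, Continuous fun y => pair x y) (hp₂ : ∀ y, Continuous fun x => pair x y)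
    (c : X → Y → EReal) (hc : IsSync c) :
    IsBipotential pair (fun x y => c x y + ((pair x y : ℝ) : EReal)) := by
  have hFst x y : y ∈ SubdiffFst pair (fun z => c z y + pair z y) x ↔ c x y = 0 :=
    (mem_subdiffFst_add_pair_iff pair (hc.ne_bot · y) x y).trans (hc.isFiniteMin_fst_iff x y)
  have hSnd x y : x ∈ SubdiffSnd pair (fun w => c x w + pair x w) y ↔ c x y = 0 :=
    (mem_subdiffSnd_add_pair_iff pair (hc.ne_bot x) x y).trans (hc.isFiniteMin_snd_iff x y)
  have hproper x y : c x y + pair x y ≠ ⊤ → c x y ≠ ⊤ :=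
    (EReal.add_ne_top_iff_ne_top_left (EReal.coe_ne_bot _) (EReal.coe_ne_top _)).1
  refine ⟨fun x y => ?_, fun y ⟨x, hx⟩ => ?_, fun x ⟨y, hy⟩ => ?_, fun x y => ?_,
    fun x y => (hFst x y).trans (hSnd x y).symm,
    fun x y => (hSnd x y).trans EReal.add_coe_eq_coe_iff.symm⟩
  · exact EReal.add_ne_bot_iff.2 ⟨hc.ne_bot x y, EReal.coe_ne_bot _⟩
  · obtain ⟨hconv, hlsc⟩ := hc.convex_lsc_fst y ⟨x, hproper x y hx⟩
    exact ⟨hconv.add_linearMap (pair.flip y), hlsc.add_coe_continuous (hp₂ y)⟩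
  · obtain ⟨hconv, hlsc⟩ := hc.convex_lsc_snd x ⟨y, hproper x y hy⟩
    exact ⟨hconv.add_linearMap (pair x), hlsc.add_coe_continuous (hp₁ x)⟩
  · exact le_add_of_nonneg_left (hc.nonneg x y)
end
end

section
/- For any BB-graph M ⊆ X × Y, the function b_∞(x,y) := ⟨x,y⟩ + Ψ_M(x,y), where Ψ_M is the indicator function of M, is a bipotential whose graph M(b_∞) equals M. -/
open scoped Classical
noncomputable section

/-- A BB-graph: nonempty with convex closed sections. -/
def IsBBGraph {X Y : Type*} [AddCommGroup X] [Module ℝ X] [TopologicalSpace X]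
    [AddCommGroup Y] [Module ℝ Y] [TopologicalSpace Y] (M : Set (X × Y)) : Prop :=
  M.Nonempty ∧
    (∀ x, Convex ℝ {y | (x, y) ∈ M} ∧ IsClosed {y | (x, y) ∈ M}) ∧
    (∀ y, Convex ℝ {x | (x, y) ∈ M} ∧ IsClosed {x | (x, y) ∈ M})

/-- The indicator function of a set, with values in `ℝ ∪ {+∞}`. -/
def erealIndicator {X Y : Type*} (M : Set (X × Y)) (x : X) (y : Y) : EReal :=
  if (x, y) ∈ M then 0 else ⊤
private lemma mul_ne_bot_of_pos {r : ℝ} (hr : 0 < r) {a : EReal} (ha : a ≠ ⊥) :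
    (r : EReal) * a ≠ ⊥ := by
  induction a using EReal.rec with
  | bot => exact absurd rfl ha
  | coe x => rw [← EReal.coe_mul]; exact EReal.coe_ne_bot _
  | top => rw [EReal.coe_mul_top_of_pos hr]; exact top_ne_bot

private lemma convex_helper [AddCommGroup Z] [Module ℝ Z] (g : Z →ₗ[ℝ] ℝ)
    (S : Set Z) (hS : Convex ℝ S) :
    ERealConvexOn (fun z => ((g z : ℝ) : EReal) + if z ∈ S then (0:EReal) else ⊤) := by
  intro x z t ht0 ht1
  dsimp only
  rcases ht0.eq_or_lt with h0 | h0
  · simp [← h0]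
  rcases ht1.eq_or_lt with h1 | h1
  · subst h1
    have h11 : (1 : EReal) - (1:ℝ) = ((0:ℝ) : EReal) := by norm_cast
    rw [h11, sub_self, zero_smul, add_zero, one_smul, EReal.coe_zero, zero_mul,
      add_zero, EReal.coe_one, one_mul]
  have hs : (0:ℝ) < 1 - t := by linarith
  have hco : (1 - (t:EReal)) = ((1 - t : ℝ) : EReal) := by norm_cast
  rw [hco]
  have hnb : ∀ w : Z, ((g w : ℝ) : EReal) + (if w ∈ S then (0:EReal) else ⊤) ≠ ⊥ := by
    intro w; split <;> simp [EReal.coe_add_top]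
  by_cases hx : x ∈ S <;> by_cases hz : z ∈ S
  · have hm : t • x + (1 - t) • z ∈ S := hS hx hz ht0 hs.le (by ring)
    rw [if_pos hm, if_pos hx, if_pos hz, add_zero, add_zero, add_zero, map_add,
      map_smul, map_smul, smul_eq_mul, smul_eq_mul, EReal.coe_add, EReal.coe_mul,
      EReal.coe_mul]
  · refine le_top.trans_eq (Eq.symm ?_)
    rw [if_neg hz, EReal.coe_add_top, EReal.coe_mul_top_of_pos hs, EReal.add_top_of_ne_bot]
    exact mul_ne_bot_of_pos h0 (hnb x)
  · refine le_top.trans_eq (Eq.symm ?_)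
    rw [if_neg hx, EReal.coe_add_top, EReal.coe_mul_top_of_pos h0, EReal.top_add_of_ne_bot]
    exact mul_ne_bot_of_pos hs (hnb z)
  · refine le_top.trans_eq (Eq.symm ?_)
    rw [if_neg hz, EReal.coe_add_top, EReal.coe_mul_top_of_pos hs, EReal.add_top_of_ne_bot]
    exact mul_ne_bot_of_pos h0 (hnb x)

private lemma lsc_helper [TopologicalSpace Z] (g : Z → ℝ) (hg : Continuous g)
    (S : Set Z) (hS : IsClosed S) :
    LowerSemicontinuous (fun z => ((g z : ℝ) : EReal) + if z ∈ S then (0:EReal) else ⊤) := by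
  intro z₀ c hc
  dsimp only at hc ⊢
  by_cases h0 : z₀ ∈ S
  · rw [if_pos h0, add_zero] at hc
    have hlsc : LowerSemicontinuous (fun z => ((g z : ℝ) : EReal)) :=
      (continuous_coe_real_ereal.comp hg).lowerSemicontinuous
    filter_upwards [hlsc z₀ c hc] with z hz
    refine hz.trans_le ?_
    split
    · simp
    · simp [EReal.coe_add_top]
  · filter_upwards [hS.isOpen_compl.mem_nhds h0] with z hz
    rw [if_neg hz, EReal.coe_add_top]
    rw [if_neg h0, EReal.coe_add_top] at hc
    exact hc

theorem bbGraph_indicator_bipotential {X Y : Type*}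
    [AddCommGroup X] [Module ℝ X] [TopologicalSpace X]
    [AddCommGroup Y] [Module ℝ Y] [TopologicalSpace Y]
    (pair : X →ₗ[ℝ] Y →ₗ[ℝ] ℝ)
    (hp₁ : ∀ x, Continuous fun y => pair x y) (hp₂ : ∀ y, Continuous fun x => pair x y)
    (M : Set (X × Y)) (hM : IsBBGraph M) :
    IsBipotential pair (fun x y => ((pair x y : ℝ) : EReal) + erealIndicator M x y) ∧
      ∀ x y, ((pair x y : ℝ) : EReal) + erealIndicator M x y = ((pair x y : ℝ) : EReal)
        ↔ (x, y) ∈ M := by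
  set b : X → Y → EReal := fun x y => ((pair x y : ℝ) : EReal) + erealIndicator M x y with hb
  have key : ∀ x y, b x y = ((pair x y : ℝ) : EReal) ↔ (x, y) ∈ M := by
    intro x y
    simp only [hb, erealIndicator]
    split_ifs with h
    · simp [h]
    · simp only [EReal.coe_add_top]
      exact iff_of_false (fun ht => (EReal.coe_ne_top _ ht.symm)) h
  have bmem : ∀ {x y}, (x, y) ∈ M → b x y = ((pair x y : ℝ) : EReal) := by
    intro x y h; exact (key x y).2 h
  have btop : ∀ {x y}, (x, y) ∉ M → b x y = ⊤ := by
    intro x y h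
    simp only [hb, erealIndicator, if_neg h, EReal.coe_add_top]
  have snd_iff : ∀ x y, x ∈ SubdiffSnd pair (b x) y ↔ (x, y) ∈ M := by
    intro x y
    constructor
    · intro h
      by_contra hm
      have h0 := h y
      rw [sub_self, map_zero, btop hm, EReal.sub_top] at h0
      simp at h0
    · intro hm w
      rw [bmem hm]
      by_cases hw : (x, w) ∈ M
      · rw [bmem hw, ← EReal.coe_sub, EReal.coe_le_coe_iff, ← map_sub]
      · rw [btop hw, EReal.top_sub_coe]
        exact le_top
  have fst_iff : ∀ x y, y ∈ SubdiffFst pair (fun x' => b x' y) x ↔ (x, y) ∈ M := by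
    intro x y
    constructor
    · intro h
      by_contra hm
      have h0 := h x
      rw [sub_self, map_zero, LinearMap.zero_apply] at h0
      simp only at h0
      rw [btop hm, EReal.sub_top] at h0
      simp at h0
    · intro hm z
      simp only
      rw [bmem hm]
      by_cases hz : (z, y) ∈ M
      · rw [bmem hz, ← EReal.coe_sub, EReal.coe_le_coe_iff, map_sub,
          LinearMap.sub_apply]
      · rw [btop hz, EReal.top_sub_coe]
        exact le_top
  refine ⟨⟨?_, ?_, ?_, ?_, ?_, ?_⟩, key⟩
  · intro x y
    simp only [hb, erealIndicator]
    split <;> simp [EReal.coe_add_top]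
  · intro y _
    constructor
    · exact convex_helper (pair.flip y) {x | (x, y) ∈ M} (hM.2.2 y).1
    · exact lsc_helper (fun x => pair x y) (hp₂ y) {x | (x, y) ∈ M} (hM.2.2 y).2
  · intro x _
    constructor
    · exact convex_helper (pair x) {y | (x, y) ∈ M} (hM.2.1 x).1
    · exact lsc_helper (fun y => pair x y) (hp₁ x) {y | (x, y) ∈ M} (hM.2.1 x).2
  · intro x y
    refine le_add_of_nonneg_right ?_
    simp only [erealIndicator]
    split <;> simp
  · intro x y
    exact (fst_iff x y).trans (snd_iff x y).symm
  · intro x y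
    exact (snd_iff x y).trans (key x y).symm
end
end

section
/- If b_p is a bipotential on Sym(n) × Sym(n), then for any Δt > 0 and fixed σ_k ∈ Sym(n), the function b_{p,k}(Δε, Δσ) := Δt · b_p((1/Δt)Δε, σ_k + Δσ) − ⟨Δε, σ_k⟩ is again a bipotential, and the relation (1/Δt)Δε ∈ ∂b_p((1/Δt)Δε, ·)(σ_k + Δσ) holds if and only if Δε ∈ ∂b_{p,k}(Δε, ·)(Δσ). -/
open scoped Classical
noncomputable section

/-- The submodule of symmetric `n × n` real matrices. -/
def SymMat (n : ℕ) : Submodule ℝ (Matrix (Fin n) (Fin n) ℝ) where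
  carrier := {A | A.IsSymm}
  add_mem' := fun ha hb => ha.add hb
  zero_mem' := Matrix.isSymm_zero
  smul_mem' := fun c _ h => h.smul c

/-- The duality product `⟨ε, σ⟩ = tr(εσ)` on symmetric matrices. -/
def symPair (n : ℕ) : ↥(SymMat n) →ₗ[ℝ] ↥(SymMat n) →ₗ[ℝ] ℝ :=
  LinearMap.mk₂ ℝ (fun a b => ((a : Matrix (Fin n) (Fin n) ℝ) * (b : Matrix (Fin n) (Fin n) ℝ)).trace)
    (by intro a a' b; simp [Matrix.add_mul, Matrix.trace_add])
    (by intro c a b; simp [Matrix.smul_mul, Matrix.trace_smul])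
    (by intro a b b'; simp [Matrix.mul_add, Matrix.trace_add])
    (by intro c a b; simp [Matrix.mul_smul, Matrix.trace_smul])

/-!
The time-discretised potential arises from `b_p` by two operations, each of which preserves the
bipotential axioms: the translation `(x, y) ↦ b x (y₀ + y) - ⟨x, y₀⟩` and the rescaling
`(x, y) ↦ c * b (c⁻¹ • x) y` with `c > 0`. Under the translation the subdifferentials correspond
through `y ↦ y₀ + y`, under the rescaling through `x ↦ c⁻¹ • x`, and in both cases the extremal
relation `b x y = ⟨x, y⟩` is transported to itself. Composing the two correspondences gives the
final equivalence of subdifferential relations.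
-/

namespace EReal

-- Subtracting a real number is an order automorphism of `EReal` fixing `⊥` and `⊤`, so these
-- identities need no finiteness hypotheses.
lemma sub_coe_sub_sub_coe (a b : EReal) (r s : ℝ) :
    (a - r) - (b - s) = (a - b) - ((r - s : ℝ) : EReal) := by
  induction a <;> induction b <;> simp [← coe_sub, sub_sub_sub_comm]

lemma sub_coe_add_sub_coe (a b : EReal) (r s : ℝ) :
    (a - r) + (b - s) = (a + b) - ((r + s : ℝ) : EReal) := by
  induction a <;> induction b <;> simp [← coe_sub, ← coe_add, sub_add_sub_comm]

lemma sub_coe_eq_coe_iff {a : EReal} {r s : ℝ} : a - r = s ↔ a = ((s + r : ℝ) : EReal) := by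
  induction a with
  | bot => simp [-coe_add]
  | coe a => norm_cast; exact sub_eq_iff_eq_add
  | top => simp [-coe_add]

lemma sub_coe_ne_bot {a : EReal} (ha : a ≠ ⊥) (r : ℝ) : a - r ≠ ⊥ := by
  induction a <;> simp_all [← coe_sub]

lemma coe_le_sub_coe_iff {a : EReal} {p r : ℝ} :
    (p : EReal) ≤ a - r ↔ ((p + r : ℝ) : EReal) ≤ a := by
  rw [le_sub_iff_add_le (.inl (coe_ne_bot r)) (.inl (coe_ne_top r)), coe_add]

lemma coe_inv_mul_coe_mul {c : ℝ} (hc : c ≠ 0) (a : EReal) :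
    ((c⁻¹ : ℝ) : EReal) * (c * a) = a := by
  rw [← mul_assoc, ← coe_mul, inv_mul_cancel₀ hc, coe_one, one_mul]

lemma coe_le_coe_mul_iff {c : ℝ} (hc : 0 < c) {p : ℝ} {a : EReal} :
    (p : EReal) ≤ c * a ↔ ((c⁻¹ * p : ℝ) : EReal) ≤ a := by
  constructor
  · intro h
    simpa [coe_mul, coe_inv_mul_coe_mul hc.ne'] using
      mul_le_mul_of_nonneg_left h (EReal.coe_nonneg.2 (inv_nonneg.2 hc.le))
  · intro h
    simpa [coe_mul, ← mul_assoc, ← coe_mul, mul_inv_cancel₀ hc.ne'] using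
      mul_le_mul_of_nonneg_left h (EReal.coe_nonneg.2 hc.le)

lemma coe_mul_eq_coe_mul_iff {c : ℝ} (hc : c ≠ 0) {a b : EReal} :
    (c : EReal) * a = c * b ↔ a = b :=
  ⟨fun h => by rw [← coe_inv_mul_coe_mul hc a, h, coe_inv_mul_coe_mul hc], congrArg _⟩

lemma coe_mul_ne_bot {c : ℝ} (hc : 0 < c) {a : EReal} (ha : a ≠ ⊥) : (c : EReal) * a ≠ ⊥ := by
  simp [mul_eq_bot, ha, hc.not_gt, hc]

lemma continuous_coe_mul (c : ℝ) : Continuous fun a : EReal => (c : EReal) * a :=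
  continuous_iff_continuousAt.2 fun _ =>
    Tendsto.const_mul Filter.tendsto_id (.inl (coe_ne_bot c)) (.inl (coe_ne_top c))

end EReal

section Convexity

variable {X Y : Type*} [AddCommGroup X] [Module ℝ X] [AddCommGroup Y] [Module ℝ Y]

lemma ERealConvexOn.comp_const_add {f : Y → EReal} (hf : ERealConvexOn f) (y₀ : Y) :
    ERealConvexOn fun y => f (y₀ + y) := by
  intro x z t ht₀ ht₁
  have hcombo : y₀ + (t • x + (1 - t) • z) = t • (y₀ + x) + (1 - t) • (y₀ + z) := by module
  simpa only [hcombo] using hf (y₀ + x) (y₀ + z) t ht₀ ht₁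

lemma ERealConvexOn.comp_smul {f : X → EReal} (hf : ERealConvexOn f) (c : ℝ) :
    ERealConvexOn fun x => f (c • x) := by
  intro x z t ht₀ ht₁
  have hcombo : c • (t • x + (1 - t) • z) = t • (c • x) + (1 - t) • (c • z) := by module
  simpa only [hcombo] using hf (c • x) (c • z) t ht₀ ht₁

lemma ERealConvexOn.const_mul {f : X → EReal} (hf : ERealConvexOn f) {c : ℝ} (hc : 0 ≤ c) :
    ERealConvexOn fun x => (c : EReal) * f x := by
  intro x z t ht₀ ht₁
  calc (c : EReal) * f (t • x + (1 - t) • z)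
      ≤ c * (t * f x + (1 - t) * f z) := mul_le_mul_of_nonneg_left (hf x z t ht₀ ht₁)
        (EReal.coe_nonneg.2 hc)
    _ = t * (c * f x) + (1 - t) * (c * f z) := by
      rw [EReal.left_distrib_of_nonneg_of_ne_top (EReal.coe_nonneg.2 hc) (EReal.coe_ne_top c),
        mul_left_comm, mul_left_comm (c : EReal)]

lemma ERealConvexOn.sub_affineMap {f : X → EReal} (hf : ERealConvexOn f) (ℓ : X →ᵃ[ℝ] ℝ) :
    ERealConvexOn fun x => f x - (ℓ x : EReal) := by
  intro x z t ht₀ ht₁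
  have hcombo : ℓ (t • x + (1 - t) • z) = t * ℓ x + (1 - t) * ℓ z :=
    Convex.combo_affine_apply (add_sub_cancel t 1)
  have hmul_sub (s : ℝ) (hs : 0 ≤ s) (a : EReal) (r : ℝ) :
      (s : EReal) * (a - r) = s * a - ((s * r : ℝ) : EReal) := by
    rw [EReal.mul_sub_of_nonneg_of_ne_top (EReal.coe_nonneg.2 hs) (EReal.coe_ne_top s),
      EReal.coe_mul]
  dsimp only
  rw [show (1 - (t : EReal)) = ((1 - t : ℝ) : EReal) by norm_cast, hcombo,
    hmul_sub t ht₀, hmul_sub (1 - t) (by linarith), EReal.sub_coe_add_sub_coe]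
  exact EReal.sub_le_sub (hf x z t ht₀ ht₁) le_rfl

end Convexity

section Semicontinuity

variable {X : Type*} [TopologicalSpace X] {f : X → EReal}

lemma LowerSemicontinuous.coe_mul (hf : LowerSemicontinuous f) {c : ℝ} (hc : 0 ≤ c) :
    LowerSemicontinuous fun x => (c : EReal) * f x :=
  (EReal.continuous_coe_mul c).comp_lowerSemicontinuous hf
    fun _ _ h => mul_le_mul_of_nonneg_left h (EReal.coe_nonneg.2 hc)

lemma LowerSemicontinuous.sub_continuous (hf : LowerSemicontinuous f) {ℓ : X → ℝ}
    (hℓ : Continuous ℓ) : LowerSemicontinuous fun x => f x - (ℓ x : EReal) := by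
  have hneg : Continuous fun x => ((-ℓ x : ℝ) : EReal) := continuous_coe_real_ereal.comp hℓ.neg
  simpa only [sub_eq_add_neg, EReal.coe_neg] using hf.add' hneg.lowerSemicontinuous
    fun x => EReal.continuousAt_add (.inr (EReal.coe_ne_bot _)) (.inr (EReal.coe_ne_top _))

end Semicontinuity

section Subdifferential

variable {X Y : Type*} [AddCommGroup X] [Module ℝ X] [AddCommGroup Y] [Module ℝ Y]
  (pair : X →ₗ[ℝ] Y →ₗ[ℝ] ℝ)

lemma LinearMap.mul_apply_inv_smul {c : ℝ} (hc : c ≠ 0) (x : X) (y : Y) :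
    c * pair (c⁻¹ • x) y = pair x y := by
  rw [map_smul, LinearMap.smul_apply, smul_eq_mul, mul_inv_cancel_left₀ hc]

lemma mem_subdiffSnd_comp_const_add_sub_iff (g : Y → EReal) (y₀ y : Y) (r : ℝ) (x : X) :
    x ∈ SubdiffSnd pair (fun w => g (y₀ + w) - r) y ↔ x ∈ SubdiffSnd pair g (y₀ + y) := by
  simp only [SubdiffSnd, Set.mem_ofPred_eq, EReal.sub_coe_sub_sub_coe, sub_self, EReal.coe_zero,
    sub_zero]
  conv_rhs => rw [(Equiv.addLeft y₀).surjective.forall]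
  simp only [Equiv.coe_addLeft, add_sub_add_left_eq_sub]

lemma mem_subdiffSnd_coe_mul_iff (g : Y → EReal) {c : ℝ} (hc : 0 < c) (x : X) (y : Y) :
    x ∈ SubdiffSnd pair (fun w => (c : EReal) * g w) y ↔ c⁻¹ • x ∈ SubdiffSnd pair g y := by
  simp only [SubdiffSnd, Set.mem_ofPred_eq,
    ← EReal.mul_sub_of_nonneg_of_ne_top (EReal.coe_nonneg.2 hc.le) (EReal.coe_ne_top c),
    EReal.coe_le_coe_mul_iff hc, map_smul, LinearMap.smul_apply, smul_eq_mul]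

lemma mem_subdiffFst_sub_pair_iff (f : X → EReal) (y₀ y : Y) (x : X) :
    y ∈ SubdiffFst pair (fun x' => f x' - pair x' y₀) x ↔ y₀ + y ∈ SubdiffFst pair f x := by
  simp only [SubdiffFst, Set.mem_ofPred_eq, EReal.sub_coe_sub_sub_coe, ← LinearMap.map_sub₂,
    EReal.coe_le_sub_coe_iff, ← map_add, add_comm y]

lemma mem_subdiffFst_coe_mul_comp_smul_iff (f : X → EReal) {c : ℝ} (hc : 0 < c) (y : Y) (x : X) :
    y ∈ SubdiffFst pair (fun x' => (c : EReal) * f (c⁻¹ • x')) x ↔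
      y ∈ SubdiffFst pair f (c⁻¹ • x) := by
  have hsurj : Function.Surjective fun x : X => c⁻¹ • x :=
    fun x => ⟨c • x, inv_smul_smul₀ hc.ne' x⟩
  simp only [SubdiffFst, Set.mem_ofPred_eq,
    ← EReal.mul_sub_of_nonneg_of_ne_top (EReal.coe_nonneg.2 hc.le) (EReal.coe_ne_top c),
    EReal.coe_le_coe_mul_iff hc]
  conv_rhs => rw [hsurj.forall]
  simp only [← smul_sub, map_smul, LinearMap.smul_apply, smul_eq_mul]

end Subdifferential

section Bipotential

variable {X Y : Type*} [AddCommGroup X] [Module ℝ X] [TopologicalSpace X]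
  [AddCommGroup Y] [Module ℝ Y] [TopologicalSpace Y]
  {pair : X →ₗ[ℝ] Y →ₗ[ℝ] ℝ} {b : X → Y → EReal}

theorem IsBipotential.comp_const_add_sub_pair [ContinuousAdd Y] (hb : IsBipotential pair b)
    (y₀ : Y) (hy₀ : Continuous fun x => pair x y₀) :
    IsBipotential pair fun x y => b x (y₀ + y) - pair x y₀ where
  ne_bot x y := EReal.sub_coe_ne_bot (hb.ne_bot _ _) _
  convex_lsc_fst y := by
    rintro ⟨x, hx⟩
    obtain ⟨hconv, hlsc⟩ :=
      hb.convex_lsc_fst (y₀ + y) ⟨x, fun h => hx (by rw [h, EReal.top_sub_coe])⟩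
    exact ⟨hconv.sub_affineMap (pair.flip y₀).toAffineMap, hlsc.sub_continuous hy₀⟩
  convex_lsc_snd x := by
    rintro ⟨y, hy⟩
    obtain ⟨hconv, hlsc⟩ :=
      hb.convex_lsc_snd x ⟨y₀ + y, fun h => hy (by rw [h, EReal.top_sub_coe])⟩
    exact ⟨(hconv.comp_const_add y₀).sub_affineMap (AffineMap.const ℝ Y (pair x y₀)),
      (hlsc.comp (continuous_const_add y₀)).sub_continuous continuous_const⟩
  ge_pair x y := by
    rw [EReal.coe_le_sub_coe_iff, ← map_add, add_comm]
    exact hb.ge_pair x (y₀ + y)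
  subdiff_iff₁ x y := by
    rw [mem_subdiffFst_sub_pair_iff, hb.subdiff_iff₁, mem_subdiffSnd_comp_const_add_sub_iff]
  subdiff_iff₂ x y := by
    rw [mem_subdiffSnd_comp_const_add_sub_iff, hb.subdiff_iff₂, EReal.sub_coe_eq_coe_iff,
      ← map_add, add_comm]

theorem IsBipotential.coe_mul_comp_inv_smul [ContinuousConstSMul ℝ X] (hb : IsBipotential pair b)
    {c : ℝ} (hc : 0 < c) : IsBipotential pair fun x y => (c : EReal) * b (c⁻¹ • x) y where
  ne_bot x y := EReal.coe_mul_ne_bot hc (hb.ne_bot _ _)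
  convex_lsc_fst y := by
    rintro ⟨x, hx⟩
    obtain ⟨hconv, hlsc⟩ :=
      hb.convex_lsc_fst y ⟨c⁻¹ • x, fun h => hx (by rw [h, EReal.coe_mul_top_of_pos hc])⟩
    exact ⟨(hconv.comp_smul c⁻¹).const_mul hc.le,
      (hlsc.comp (continuous_const_smul c⁻¹)).coe_mul hc.le⟩
  convex_lsc_snd x := by
    rintro ⟨y, hy⟩
    obtain ⟨hconv, hlsc⟩ :=
      hb.convex_lsc_snd (c⁻¹ • x) ⟨y, fun h => hy (by rw [h, EReal.coe_mul_top_of_pos hc])⟩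
    exact ⟨hconv.const_mul hc.le, hlsc.coe_mul hc.le⟩
  ge_pair x y := by
    rw [EReal.coe_le_coe_mul_iff hc, ← pair.mul_apply_inv_smul hc.ne',
      inv_mul_cancel_left₀ hc.ne']
    exact hb.ge_pair _ _
  subdiff_iff₁ x y := by
    rw [mem_subdiffFst_coe_mul_comp_smul_iff pair (b · y) hc, hb.subdiff_iff₁,
      mem_subdiffSnd_coe_mul_iff pair _ hc]
  subdiff_iff₂ x y := by
    rw [mem_subdiffSnd_coe_mul_iff pair _ hc, hb.subdiff_iff₂,
      ← EReal.coe_mul_eq_coe_mul_iff hc.ne', ← EReal.coe_mul, pair.mul_apply_inv_smul hc.ne']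

end Bipotential

theorem time_discretised_plastic_bipotential {n : ℕ}
    (bp : ↥(SymMat n) → ↥(SymMat n) → EReal) (hbp : IsBipotential (symPair n) bp)
    (Δt : ℝ) (hΔt : 0 < Δt) (σk : ↥(SymMat n)) :
    IsBipotential (symPair n)
      (fun Δε Δσ => ((Δt : ℝ) : EReal) * bp ((1 / Δt) • Δε) (σk + Δσ)
          - ((symPair n Δε σk : ℝ) : EReal)) ∧
      ∀ Δε Δσ,
        ((1 / Δt) • Δε ∈ SubdiffSnd (symPair n) (bp ((1 / Δt) • Δε)) (σk + Δσ) ↔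
          Δε ∈ SubdiffSnd (symPair n)
            (fun Δσ' => ((Δt : ℝ) : EReal) * bp ((1 / Δt) • Δε) (σk + Δσ')
              - ((symPair n Δε σk : ℝ) : EReal)) Δσ) := by
  have hσk : Continuous fun ε => symPair n ε σk :=
    ((symPair n).flip σk).continuous_of_finiteDimensional
  have hfactor (Δε Δσ : ↥(SymMat n)) :
      (Δt : EReal) * bp ((1 / Δt) • Δε) (σk + Δσ) - (symPair n Δε σk : EReal) =
        Δt * (bp (Δt⁻¹ • Δε) (σk + Δσ) - (symPair n (Δt⁻¹ • Δε) σk : EReal)) := by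
    rw [EReal.mul_sub_of_nonneg_of_ne_top (EReal.coe_nonneg.2 hΔt.le) (EReal.coe_ne_top Δt),
      ← EReal.coe_mul, (symPair n).mul_apply_inv_smul hΔt.ne', one_div]
  simp only [hfactor]
  refine ⟨(hbp.comp_const_add_sub_pair σk hσk).coe_mul_comp_inv_smul hΔt, fun Δε Δσ => ?_⟩
  rw [mem_subdiffSnd_coe_mul_iff _ _ hΔt, mem_subdiffSnd_comp_const_add_sub_iff, one_div]
end
end

section
/- The function b_p'((e_m, e),(s_m, s)) defined to equal C₁ e_m + C₂(s_m − c/tan φ)‖e‖ when (s_m,s) ∈ K'_stress and (e_m,e) ∈ K'_strain, and +∞ otherwise, where C₁ = c/tan φ and C₂ = k_d(tan θ − tan φ), is nonnegative minus the duality product; that is, for all (e_m,e) and (s_m,s): b_p'((e_m,e),(s_m,s)) ≥ e_m s_m + tr(e s). -/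
open Real
open scoped Classical
noncomputable section

/-- The norm `‖a‖ = √(tr(a²))` on symmetric matrices. -/
def symNorm {n : ℕ} (a : Matrix (Fin n) (Fin n) ℝ) : ℝ :=
  Real.sqrt ((a * a).trace)

/-- The Berga–de Saxcé bipotential for the non-associated Drücker–Prager law, in
hydrostatic/deviatoric coordinates `((e_m, e), (s_m, s))`. -/
def bpDP (n : ℕ) (c kd φ θ : ℝ) (em : ℝ) (e : Matrix (Fin n) (Fin n) ℝ)
    (sm : ℝ) (s : Matrix (Fin n) (Fin n) ℝ) : EReal :=
  if (1 / kd) * symNorm s + sm * Real.tan φ ≤ c ∧ kd * Real.tan θ * symNorm e ≤ em then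
    (((c / Real.tan φ) * em
        + (kd * (Real.tan θ - Real.tan φ)) * (sm - c / Real.tan φ) * symNorm e : ℝ) : EReal)
  else ⊤

lemma symNorm_nonneg {n : ℕ} (a : Matrix (Fin n) (Fin n) ℝ) : 0 ≤ symNorm a :=
  Real.sqrt_nonneg _

lemma trace_mul_self_symm {n : ℕ} (a : Matrix (Fin n) (Fin n) ℝ) (ha : a.IsSymm) :
    (a * a).trace = ∑ p : Fin n × Fin n, (a p.1 p.2) ^ 2 := by
  rw [Matrix.trace, Fintype.sum_prod_type]
  simp only [Matrix.diag, Matrix.mul_apply, sq]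
  refine Finset.sum_congr rfl fun i _ => Finset.sum_congr rfl fun j _ => ?_
  rw [ha.apply]

lemma trace_le_symNorm_mul {n : ℕ} (e s : Matrix (Fin n) (Fin n) ℝ)
    (he : e.IsSymm) (hs : s.IsSymm) :
    (e * s).trace ≤ symNorm e * symNorm s := by
  have htr : (e * s).trace = ∑ p : Fin n × Fin n, (e p.1 p.2) * (s p.1 p.2) := by
    rw [Matrix.trace, Fintype.sum_prod_type]
    simp only [Matrix.diag, Matrix.mul_apply]
    refine Finset.sum_congr rfl fun i _ => Finset.sum_congr rfl fun j _ => ?_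
    rw [hs.apply]
  rw [htr, symNorm, symNorm, trace_mul_self_symm e he, trace_mul_self_symm s hs]
  exact Real.sum_mul_le_sqrt_mul_sqrt _ _ _

theorem bpDP_ge_pairing (n : ℕ) (c kd φ θ : ℝ) (hc : 0 < c) (hkd : 0 < kd)
    (hφ : φ ∈ Set.Ioo 0 (π / 2)) (hθ : θ ∈ Set.Icc 0 φ)
    (em sm : ℝ) (e s : Matrix (Fin n) (Fin n) ℝ)
    (he : e.IsSymm) (he0 : e.trace = 0) (hs : s.IsSymm) (hs0 : s.trace = 0) :
    ((em * sm + (e * s).trace : ℝ) : EReal) ≤ bpDP n c kd φ θ em e sm s := by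
  rw [bpDP]
  by_cases h : (1 / kd) * symNorm s + sm * Real.tan φ ≤ c ∧ kd * Real.tan θ * symNorm e ≤ em
  · rw [if_pos h]
    rw [EReal.coe_le_coe_iff]
    obtain ⟨h1, h2⟩ := h
    set Ne := symNorm e with hNe
    set Ns := symNorm s with hNs
    have hNe0 : 0 ≤ Ne := symNorm_nonneg e
    have hNs0 : 0 ≤ Ns := symNorm_nonneg s
    have hCS : (e * s).trace ≤ Ne * Ns := trace_le_symNorm_mul e s he hs
    set T := Real.tan φ with hT
    set t := Real.tan θ with ht
    have hT0 : 0 < T := Real.tan_pos_of_pos_of_lt_pi_div_two hφ.1 hφ.2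
    have ht0 : 0 ≤ t := Real.tan_nonneg_of_nonneg_of_le_pi_div_two hθ.1 (le_trans hθ.2 hφ.2.le)
    have htT : t ≤ T := by
      rcases eq_or_lt_of_le hθ.2 with h' | h'
      · rw [ht, hT, h']
      · exact le_of_lt (Real.tan_lt_tan_of_nonneg_of_lt_pi_div_two hθ.1 hφ.2 h')
    -- from h1: Ns ≤ kd * (c - sm * T)
    have hNs_le : Ns ≤ kd * (c - sm * T) := by
      have h1' : (1 / kd) * Ns + sm * T ≤ c := h1
      have : (1/kd) * Ns * kd = Ns := by field_simp
      nlinarith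
    have hsm : sm ≤ c / T := by
      rw [le_div_iff₀ hT0]
      nlinarith
    have hkey1 : 0 ≤ (c / T - sm) * (em - kd * t * Ne) :=
      mul_nonneg (by linarith) (by linarith)
    have hkey2 : 0 ≤ Ne * (kd * (c - sm * T) - Ns) :=
      mul_nonneg hNe0 (by linarith)
    set q := c / T with hqdef
    have hq : c = q * T := (div_mul_cancel₀ c hT0.ne').symm
    rw [hq] at hNs_le hkey2
    nlinarith [hkey1, hkey2, hCS]
  · rw [if_neg h]
    exact le_top
end
end

section
/- Under the hypotheses of the variational formulation (b finite-valued, lsc in both arguments, convex and differentiable with Lipschitz gradient in the first argument, b(ε,σ) ≥ tr(εσ), growth bound b(ε,σ) ≤ C(‖ε‖² + ‖σ‖²) for σ ∈ K), if (u,σ) ∈ U × Y₀ satisfies the variational inequality B(D(u),σ) ≤ B(ε,σ) − ⟨ε,σ⟩₁ for all ε ∈ L²(Ω,Sym(n)), then σ(x) ∈ ∂b(·,σ(x))(D(u)(x)) for almost every x ∈ Ω. -/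
open MeasureTheory
noncomputable section

attribute [local instance] Matrix.frobeniusNormedAddCommGroup Matrix.frobeniusNormedSpace

instance matrixMeasurableSpace (n : ℕ) : MeasurableSpace (Matrix (Fin n) (Fin n) ℝ) :=
  MeasurableSpace.pi

/-- The symmetrized gradient `D(u) = (∇u + ∇uᵀ)/2` of a displacement field. -/
def symGrad {n : ℕ} (u : (Fin n → ℝ) → (Fin n → ℝ)) (x : Fin n → ℝ) :
    Matrix (Fin n) (Fin n) ℝ :=
  Matrix.of fun i j =>
    (fderiv ℝ u x (Pi.single i 1) j + fderiv ℝ u x (Pi.single j 1) i) / 2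

/-! Fix `z`. Testing the variational inequality with `ε = z` on a measurable set `s` and
`ε = D(u)` off `s`, and using `⟨D(u), σ⟩₁ = 0`, gives
`∫_s (b(z,σ) − b(D(u),σ) − tr((z − D(u))σ)) ≥ 0` for every `s`, so the integrand is a.e.
nonnegative; `tr(εσ) ≤ b(ε,σ) ≤ C(‖ε‖² + ‖σ‖²)` keeps every integral finite. Running `z` through a
countable dense set of matrices and using continuity of `b(·,σ)` gives the inequality for all `z`
off a single null set. -/

-- The Frobenius and the product topology on matrices agree, but not at instance transparency,
-- so these instances are transported from `Fin n → Fin n → ℝ`.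
instance matrixBorelSpace (n : ℕ) : BorelSpace (Matrix (Fin n) (Fin n) ℝ) := Pi.borelSpace

instance matrixPseudoMetrizableSpace (n : ℕ) :
    TopologicalSpace.PseudoMetrizableSpace (Matrix (Fin n) (Fin n) ℝ) :=
  inferInstanceAs (TopologicalSpace.PseudoMetrizableSpace (Fin n → Fin n → ℝ))

instance matrixSecondCountableTopology (n : ℕ) :
    SecondCountableTopology (Matrix (Fin n) (Fin n) ℝ) :=
  inferInstanceAs (SecondCountableTopology (Fin n → Fin n → ℝ))

section

variable {α : Type*} [MeasurableSpace α] {μ : Measure α}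

theorem integrable_trace_mul {m : Type*} [Fintype m] {f g : α → Matrix m m ℝ}
    (hf : MemLp f 2 μ) (hg : MemLp g 2 μ) :
    Integrable (fun x => (f x * g x).trace) μ :=
  memLp_one_iff_integrable.1 <|
    ((LinearMap.mul ℝ (Matrix m m ℝ)).compr₂
      (Matrix.traceLinearMap m ℝ ℝ)).toContinuousBilinearMap.memLp_of_bilin 1 hf hg

theorem integrable_of_trace_mul_le_of_le_sq {n : ℕ}
    {b : Matrix (Fin n) (Fin n) ℝ → Matrix (Fin n) (Fin n) ℝ → ℝ}
    (hbmeas : Measurable (Function.uncurry b)) (hbge : ∀ εm σm, (εm * σm).trace ≤ b εm σm)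
    {K : Set (Matrix (Fin n) (Fin n) ℝ)} {C : ℝ}
    (hgrowth : ∀ εm σm, σm ∈ K → b εm σm ≤ C * (‖εm‖ ^ 2 + ‖σm‖ ^ 2))
    {f σ : α → Matrix (Fin n) (Fin n) ℝ} (hf : MemLp f 2 μ) (hσ : MemLp σ 2 μ)
    (hσK : ∀ᵐ x ∂μ, σ x ∈ K) :
    Integrable (fun x => b (f x) (σ x)) μ :=
  integrable_of_le_of_le
    (hbmeas.comp_aemeasurable (hf.aemeasurable.prodMk hσ.aemeasurable)).aestronglyMeasurable
    (ae_of_all _ fun x => hbge (f x) (σ x)) (hσK.mono fun x hx => hgrowth (f x) (σ x) hx)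
    (integrable_trace_mul hf hσ)
    (((hf.integrable_norm_pow two_ne_zero).add (hσ.integrable_norm_pow two_ne_zero)).const_mul C)

-- Stated for a general normed group: applying `MemLp.piecewise` to matrices directly makes
-- Lean unfold the Frobenius topology.
theorem MeasureTheory.MemLp.piecewise_const {E : Type*} [NormedAddCommGroup E]
    [IsFiniteMeasure μ] {p : ENNReal} {f : α → E} (hf : MemLp f p μ) (z : E) {s : Set α}
    [DecidablePred (· ∈ s)] (hs : MeasurableSet s) : MemLp (s.piecewise (fun _ => z) f) p μ :=
  ((memLp_const z).restrict s).piecewise hs (hf.restrict sᶜ)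

open Classical in
theorem ae_le_of_integral_le_integral_piecewise {β : Type*} {g : α → β → ℝ} {u : α → β} {z : β}
    (hu : Integrable (fun x => g x (u x)) μ) (hz : Integrable (fun x => g x z) μ)
    (hle : ∀ s, MeasurableSet s →
      ∫ x, g x (u x) ∂μ ≤ ∫ x, g x (s.piecewise (fun _ => z) u x) ∂μ) :
    ∀ᵐ x ∂μ, g x (u x) ≤ g x z := by
  have hnonneg : 0 ≤ᵐ[μ] fun x => g x z - g x (u x) := by
    refine ae_nonneg_of_forall_setIntegral_nonneg (hz.sub hu) fun s hs _ => ?_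
    have hsplit := integral_add_compl hs hu
    have hpiece : ∫ x, g x (s.piecewise (fun _ => z) u x) ∂μ =
        (∫ x in s, g x z ∂μ) + ∫ x in sᶜ, g x (u x) ∂μ := by
      simp_rw [Set.apply_piecewise]
      exact integral_piecewise hs hz.integrableOn hu.integrableOn
    rw [integral_sub hz.integrableOn hu.integrableOn]
    linarith [hle s hs]
  filter_upwards [hnonneg] with x hx
  exact sub_nonneg.1 hx

theorem ae_forall_of_forall_ae_of_isClosed {β : Type*} [TopologicalSpace β]
    [TopologicalSpace.SeparableSpace β] {p : α → β → Prop} (hcl : ∀ x, IsClosed {z | p x z})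
    (hp : ∀ z, ∀ᵐ x ∂μ, p x z) : ∀ᵐ x ∂μ, ∀ z, p x z := by
  obtain ⟨D, hDc, hDd⟩ := TopologicalSpace.exists_countable_dense β
  filter_upwards [(ae_ball_iff hDc).2 fun z _ => hp z] with x hx z
  exact closure_minimal hx (hcl x) (hDd.closure_eq ▸ Set.mem_univ z)

end

theorem variational_inequality_implies_pointwise_law_general {n : ℕ}
    (Ω : Set (Fin n → ℝ)) (hΩb : Bornology.IsBounded Ω)
    (K : Set (Matrix (Fin n) (Fin n) ℝ))
    (b : Matrix (Fin n) (Fin n) ℝ → Matrix (Fin n) (Fin n) ℝ → ℝ)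
    (hbmeas : Measurable (Function.uncurry b))
    -- b convex and differentiable with Lipschitz gradient in the first argument
    (hbdiff : ∀ σm, Differentiable ℝ fun εm => b εm σm)
    (hbge : ∀ εm σm, (εm * σm).trace ≤ b εm σm)
    (C : ℝ) (hgrowth : ∀ εm σm, σm ∈ K → b εm σm ≤ C * (‖εm‖ ^ 2 + ‖σm‖ ^ 2))
    (U : Set ((Fin n → ℝ) → Fin n → ℝ)) (u : (Fin n → ℝ) → Fin n → ℝ) (hu : u ∈ U)
    (hDu : MemLp (symGrad u) 2 (volume.restrict Ω))
    (σ : (Fin n → ℝ) → Matrix (Fin n) (Fin n) ℝ)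
    (hσ : MemLp σ 2 (volume.restrict Ω))
    (hσK : ∀ᵐ x ∂volume.restrict Ω, σ x ∈ K)
    (hσY₀ : ∀ v ∈ U, ∫ x in Ω, (symGrad v x * σ x).trace = 0)
    -- the variational inequality B(D(u),σ) ≤ B(ε,σ) − ⟨ε,σ⟩₁ for all ε ∈ L²
    (hvar : ∀ ε : (Fin n → ℝ) → Matrix (Fin n) (Fin n) ℝ,
      MemLp ε 2 (volume.restrict Ω) →
      ∫ x in Ω, b (symGrad u x) (σ x) ≤
        (∫ x in Ω, b (ε x) (σ x)) - ∫ x in Ω, (ε x * σ x).trace) :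
    ∀ᵐ x ∂volume.restrict Ω, ∀ z,
      b (symGrad u x) (σ x) + ((z - symGrad u x) * σ x).trace ≤ b z (σ x) := by
  classical
  have : IsFiniteMeasure (volume.restrict Ω) := isFiniteMeasure_restrict.2 hΩb.measure_lt_top.ne
  have hbint : ∀ ε, MemLp ε 2 (volume.restrict Ω) →
      Integrable (fun x => b (ε x) (σ x)) (volume.restrict Ω) := fun ε hε =>
    integrable_of_trace_mul_le_of_le_sq hbmeas hbge hgrowth hε hσ hσK
  let g x (e : Matrix (Fin n) (Fin n) ℝ) := b e (σ x) - (e * σ x).trace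
  have hgint : ∀ ε, MemLp ε 2 (volume.restrict Ω) →
      Integrable (fun x => g x (ε x)) (volume.restrict Ω) := fun ε hε =>
    (hbint ε hε).sub (integrable_trace_mul hε hσ)
  have hmin : ∀ ε, MemLp ε 2 (volume.restrict Ω) →
      ∫ x in Ω, g x (symGrad u x) ≤ ∫ x in Ω, g x (ε x) := fun ε hε => by
    rw [integral_sub (hbint ε hε) (integrable_trace_mul hε hσ),
      integral_sub (hbint _ hDu) (integrable_trace_mul hDu hσ), hσY₀ u hu]
    linarith [hvar ε hε]
  have hpoint : ∀ z, ∀ᵐ x ∂volume.restrict Ω, g x (symGrad u x) ≤ g x z := fun z =>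
    ae_le_of_integral_le_integral_piecewise (hgint _ hDu) (hgint _ (memLp_const z))
      fun s hs => hmin _ (hDu.piecewise_const z hs)
  refine ae_forall_of_forall_ae_of_isClosed
    (p := fun x z => b (symGrad u x) (σ x) + ((z - symGrad u x) * σ x).trace ≤ b z (σ x))
    (fun x => isClosed_le (by fun_prop) (hbdiff (σ x)).continuous) fun z => ?_
  filter_upwards [hpoint z] with x hx
  simp only [g, Matrix.sub_mul, Matrix.trace_sub] at hx ⊢
  linarith

theorem variational_inequality_implies_pointwise_law {n : ℕ}
    (Ω : Set (Fin n → ℝ)) (hΩo : IsOpen Ω) (hΩb : Bornology.IsBounded Ω)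
    (K : Set (Matrix (Fin n) (Fin n) ℝ)) (hKcl : IsClosed K) (hKconv : Convex ℝ K)
    (hK0 : (0 : Matrix (Fin n) (Fin n) ℝ) ∈ K)
    (b : Matrix (Fin n) (Fin n) ℝ → Matrix (Fin n) (Fin n) ℝ → ℝ)
    (hbmeas : Measurable (Function.uncurry b))
    -- b lower semicontinuous in each argument
    (hlsc₁ : ∀ σm, LowerSemicontinuous fun εm => b εm σm)
    (hlsc₂ : ∀ εm, LowerSemicontinuous fun σm => b εm σm)
    -- b convex and differentiable with Lipschitz gradient in the first argument
    (hbconv : ∀ σm, ConvexOn ℝ Set.univ fun εm => b εm σm)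
    (hbdiff : ∀ σm, Differentiable ℝ fun εm => b εm σm)
    (L : NNReal) (hblip : ∀ σm, LipschitzWith L fun εm =>
      (fderiv ℝ (fun e => b e σm) εm : @ContinuousLinearMap ℝ ℝ _ _ (RingHom.id ℝ)
        (Matrix (Fin n) (Fin n) ℝ) (PseudoMetricSpace.toUniformSpace).toTopologicalSpace _ ℝ _ _ _ _))
    (hbge : ∀ εm σm, (εm * σm).trace ≤ b εm σm)
    (C : ℝ) (hgrowth : ∀ εm σm, σm ∈ K → b εm σm ≤ C * (‖εm‖ ^ 2 + ‖σm‖ ^ 2))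
    (U : Set ((Fin n → ℝ) → Fin n → ℝ)) (u : (Fin n → ℝ) → Fin n → ℝ) (hu : u ∈ U)
    (hDu : MemLp (symGrad u) 2 (volume.restrict Ω))
    (σ : (Fin n → ℝ) → Matrix (Fin n) (Fin n) ℝ)
    (hσ : MemLp σ 2 (volume.restrict Ω))
    (hσK : ∀ᵐ x ∂volume.restrict Ω, σ x ∈ K)
    (hσY₀ : ∀ v ∈ U, ∫ x in Ω, (symGrad v x * σ x).trace = 0)
    -- the variational inequality B(D(u),σ) ≤ B(ε,σ) − ⟨ε,σ⟩₁ for all ε ∈ L²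
    (hvar : ∀ ε : (Fin n → ℝ) → Matrix (Fin n) (Fin n) ℝ,
      MemLp ε 2 (volume.restrict Ω) →
      ∫ x in Ω, b (symGrad u x) (σ x) ≤
        (∫ x in Ω, b (ε x) (σ x)) - ∫ x in Ω, (ε x * σ x).trace) :
    ∀ᵐ x ∂volume.restrict Ω, ∀ z,
      b (symGrad u x) (σ x) + ((z - symGrad u x) * σ x).trace ≤ b z (σ x) :=
  variational_inequality_implies_pointwise_law_general Ω hΩb K b hbmeas hbdiff hbge C hgrowth U u hu
    hDu σ hσ hσK hσY₀ hvar
end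
end
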